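/- (Sweep theorem, hyperbolic-arc case.) Suppose s₁, s₂, s₃, s₄ : [0,1] → ℝ are continuous on [0,1] and differentiable on (0,1), satisfy the parallelogram and right-angle conditions p₁(t) + p₃(t) = p₂(t) + p₄(t) and ⟨p₂(t) − p₁(t), p₄(t) − p₁(t)⟩ = 0 for all t ∈ [0,1], and trace rectangles gracing γ on (0,1); suppose t ↦ Y(t) X′(t) − X(t) Y′(t) is integrable on [0,1]. If at t = 0 one has s₁(0) = s₂(0) and s₃(0) = s₄(0) (degenerate rectangle with X(0) = 0), and at t = 1 one has s₂(1) = s₃(1) and s₄(1) = s₁(1) + 1 (degenerate rectangle with Y(1) = 0), then ∫₀¹ (Y(t) X′(t) − X(t) Y′(t)) dt = ∫₀¹ det(γ(s), γ′(s)) ds; that is, the shape loop of a hyperbolic arc bounds (up to sign) the same area as the region bounded by γ. -/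

import Mathlib

/-!
Let `F` be a primitive of `φ s = det(γ s, γ' s)` and
`G t = F (s₂ t) - F (s₁ t) + (F (s₄ t) - F (s₃ t))`. For a counterclockwise rectangle with
perpendicular sides `u, v` one has `‖u‖ ‖v‖ = det(u, v)`; with this, differentiating the
parallelogram relation shows `G' = Y X' - X Y'` on `(0, 1)`. Hence the integral is `G 1 - G 0`,
and the degenerate endpoint rectangles give `G 0 = 0` and `G 1 = F (s₁ 1 + 1) - F (s₁ 1)`, the
integral of `φ` over one period.
-/

noncomputable section

/-- The planar cross product `det(u,v) = u₁v₂ − u₂v₁`. -/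
def pdet (u v : EuclideanSpace ℝ (Fin 2)) : ℝ := u 0 * v 1 - u 1 * v 0

open MeasureTheory Set Filter Topology
open scoped RealInnerProductSpace

local notation "ℝ²" => EuclideanSpace ℝ (Fin 2)

lemma pdet_smul_right (u v : ℝ²) (r : ℝ) : pdet u (r • v) = r * pdet u v := by
  simp only [pdet, PiLp.smul_apply, smul_eq_mul]; ring

lemma inner_eq_fin_two (u v : ℝ²) : ⟪u, v⟫ = u 0 * v 0 + u 1 * v 1 := by
  simp [PiLp.inner_apply, Fin.sum_univ_two, mul_comm]

lemma norm_sq_eq_fin_two (u : ℝ²) : ‖u‖ ^ 2 = u 0 ^ 2 + u 1 ^ 2 := by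
  simp [EuclideanSpace.real_norm_sq_eq, Fin.sum_univ_two]

lemma inner_sq_add_pdet_sq (u v : ℝ²) :
    ⟪u, v⟫ ^ 2 + pdet u v ^ 2 = ‖u‖ ^ 2 * ‖v‖ ^ 2 := by
  rw [inner_eq_fin_two, norm_sq_eq_fin_two, norm_sq_eq_fin_two, pdet]; ring

lemma norm_mul_norm_eq_pdet {u v : ℝ²} (hperp : ⟪u, v⟫ = 0) (hpos : 0 ≤ pdet u v) :
    ‖u‖ * ‖v‖ = pdet u v := by
  have h := inner_sq_add_pdet_sq u v
  rw [hperp] at h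
  exact (pow_left_inj₀ (by positivity) hpos two_ne_zero).1 (by linear_combination -h)

lemma pdet_parallelogram {a b c d a' b' c' d' : ℝ²} (hpar : a + c = b + d)
    (hpar' : a' + c' = b' + d') :
    pdet b b' - pdet a a' + (pdet d d' - pdet c c')
      = pdet (b' - a') (d - a) - pdet (b - a) (d' - a') := by
  obtain rfl : c = b + d - a := by rw [← hpar]; abel
  obtain rfl : c' = b' + d' - a' := by rw [← hpar']; abel
  simp only [pdet, PiLp.add_apply, PiLp.sub_apply]; ring

lemma norm_mul_inner_div_norm_sub {u v : ℝ²} (u' v' : ℝ²) (hperp : ⟪u, v⟫ = 0)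
    (hccw : 0 < pdet u v) :
    ‖v‖ * (⟪u, u'⟫ / ‖u‖) - ‖u‖ * (⟪v, v'⟫ / ‖v‖) = pdet u' v - pdet u v' := by
  have hu : u ≠ 0 := by rintro rfl; simp [pdet] at hccw
  have hv : v ≠ 0 := by rintro rfl; simp [pdet] at hccw
  have huv := norm_mul_norm_eq_pdet hperp hccw.le
  have hu0 := norm_pos_iff.2 hu
  have hv0 := norm_pos_iff.2 hv
  rw [inner_eq_fin_two] at hperp
  field_simp
  rw [mul_comm ‖v‖, huv, norm_sq_eq_fin_two, norm_sq_eq_fin_two, inner_eq_fin_two,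
    inner_eq_fin_two, pdet, pdet, pdet]
  linear_combination (u' 0 * v 0 + u' 1 * v 1 - u 0 * v' 0 - u 1 * v' 1) * hperp

lemma HasDerivAt.norm {E : Type*} [NormedAddCommGroup E] [InnerProductSpace ℝ E]
    {f : ℝ → E} {f' : E} {x : ℝ} (hf : HasDerivAt f f' x) (h0 : f x ≠ 0) :
    HasDerivAt (fun y => ‖f y‖) (⟪f x, f'⟫ / ‖f x‖) x := by
  have := hf.norm_sq.sqrt (by positivity)
  simp only [Real.sqrt_sq (norm_nonneg _)] at this
  convert this using 1
  field_simp

lemma Continuous.pdet {α : Type*} [TopologicalSpace α] {f g : α → ℝ²} (hf : Continuous f)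
    (hg : Continuous g) :
    Continuous fun x => pdet (f x) (g x) := by
  unfold _root_.pdet; fun_prop

lemma Function.Periodic.deriv {𝕜 F : Type*} [NontriviallyNormedField 𝕜] [NormedAddCommGroup F]
    [NormedSpace 𝕜 F] {f : 𝕜 → F} {T : 𝕜} (hf : Function.Periodic f T) :
    Function.Periodic (deriv f) T := by
  intro x; rw [← deriv_comp_add_const, hf.funext]

lemma norm_mul_deriv_norm_sub_eq_pdet {a b c d : ℝ → ℝ²} {a' b' c' d' : ℝ²} {t : ℝ}
    (ha : HasDerivAt a a' t) (hb : HasDerivAt b b' t) (hc : HasDerivAt c c' t)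
    (hd : HasDerivAt d d' t)
    (hpar : ∀ᶠ τ in 𝓝 t, a τ + c τ = b τ + d τ)
    (hperp : ⟪b t - a t, d t - a t⟫ = 0) (hccw : 0 < pdet (b t - a t) (d t - a t)) :
    ‖c t - b t‖ * deriv (fun τ => ‖b τ - a τ‖) t - ‖b t - a t‖ * deriv (fun τ => ‖c τ - b τ‖) t
      = pdet (b t) b' - pdet (a t) a' + (pdet (d t) d' - pdet (c t) c') := by
  have hside : (fun τ => c τ - b τ) =ᶠ[𝓝 t] fun τ => d τ - a τ := by
    filter_upwards [hpar] with τ h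
    rw [sub_eq_sub_iff_add_eq_add, add_comm, h, add_comm]
  have hpar' : a' + c' = b' + d' := by
    have h := (hc.sub hb).unique ((hd.sub ha).congr_of_eventuallyEq hside)
    rw [← sub_eq_zero] at h ⊢
    rw [← h]; abel
  have hu : b t - a t ≠ 0 := by intro h; simp [h, pdet] at hccw
  have hv : d t - a t ≠ 0 := by intro h; simp [h, pdet] at hccw
  have hside_t : c t - b t = d t - a t := hside.self_of_nhds
  have hX : HasDerivAt (fun τ => ‖b τ - a τ‖) (⟪b t - a t, b' - a'⟫ / ‖b t - a t‖) t :=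
    (hb.sub ha).norm hu
  have hY : HasDerivAt (fun τ => ‖c τ - b τ‖) (⟪d t - a t, d' - a'⟫ / ‖d t - a t‖) t :=
    ((hd.sub ha).norm hv).congr_of_eventuallyEq (hside.fun_comp norm)
  rw [pdet_parallelogram hpar.self_of_nhds hpar', hside_t, hX.deriv, hY.deriv]
  exact norm_mul_inner_div_norm_sub _ _ hperp hccw

lemma hasDerivAt_sweep {γ : ℝ → ℝ²} {F : ℝ → ℝ} (hγ : Differentiable ℝ γ)
    (hF : ∀ z, HasDerivAt F (pdet (γ z) (deriv γ z)) z) {s₁ s₂ s₃ s₄ : ℝ → ℝ} {t : ℝ}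
    (hd₁ : DifferentiableAt ℝ s₁ t) (hd₂ : DifferentiableAt ℝ s₂ t)
    (hd₃ : DifferentiableAt ℝ s₃ t) (hd₄ : DifferentiableAt ℝ s₄ t)
    (hpar : ∀ᶠ τ in 𝓝 t, γ (s₁ τ) + γ (s₃ τ) = γ (s₂ τ) + γ (s₄ τ))
    (hperp : ⟪γ (s₂ t) - γ (s₁ t), γ (s₄ t) - γ (s₁ t)⟫ = 0)
    (hccw : 0 < pdet (γ (s₂ t) - γ (s₁ t)) (γ (s₄ t) - γ (s₁ t))) :
    HasDerivAt (fun τ => F (s₂ τ) - F (s₁ τ) + (F (s₄ τ) - F (s₃ τ)))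
      (‖γ (s₃ t) - γ (s₂ t)‖ * deriv (fun τ => ‖γ (s₂ τ) - γ (s₁ τ)‖) t
        - ‖γ (s₂ t) - γ (s₁ t)‖ * deriv (fun τ => ‖γ (s₃ τ) - γ (s₂ τ)‖) t) t := by
  have corner : ∀ {s : ℝ → ℝ}, DifferentiableAt ℝ s t →
      HasDerivAt (fun τ => γ (s τ)) (deriv s t • deriv γ (s t)) t :=
    fun hs => (hγ _).hasDerivAt.scomp t hs.hasDerivAt
  have area : ∀ {s : ℝ → ℝ}, DifferentiableAt ℝ s t →
      HasDerivAt (fun τ => F (s τ)) (pdet (γ (s t)) (deriv s t • deriv γ (s t))) t := fun hs => by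
    rw [pdet_smul_right, mul_comm]; exact (hF _).comp t hs.hasDerivAt
  rw [norm_mul_deriv_norm_sub_eq_pdet (corner hd₁) (corner hd₂) (corner hd₃) (corner hd₄)
    hpar hperp hccw]
  exact ((area hd₂).sub (area hd₁)).add ((area hd₄).sub (area hd₃))

/-- Sweep theorem, hyperbolic-arc case: if the path of rectangles degenerates
at `t = 0` with `X(0) = 0` (`s₁ = s₂`, `s₃ = s₄`) and at `t = 1` with
`Y(1) = 0` (`s₂ = s₃`, `s₄ = s₁ + 1`), then the shape loop bounds (up to sign)
the same area as the region bounded by `γ`: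
`∫₀¹ (Y X′ − X Y′) dt = ∫₀¹ det(γ, γ′) ds`. -/
theorem stmt8
    (γ : ℝ → EuclideanSpace ℝ (Fin 2)) (hγ : ContDiff ℝ 1 γ)
    (hper : ∀ s : ℝ, γ (s + 1) = γ s)
    (s₁ s₂ s₃ s₄ : ℝ → ℝ)
    (hc₁ : ContinuousOn s₁ (Set.Icc (0:ℝ) 1)) (hc₂ : ContinuousOn s₂ (Set.Icc (0:ℝ) 1))
    (hc₃ : ContinuousOn s₃ (Set.Icc (0:ℝ) 1)) (hc₄ : ContinuousOn s₄ (Set.Icc (0:ℝ) 1))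
    (hd₁ : ∀ t ∈ Set.Ioo (0:ℝ) 1, DifferentiableAt ℝ s₁ t)
    (hd₂ : ∀ t ∈ Set.Ioo (0:ℝ) 1, DifferentiableAt ℝ s₂ t)
    (hd₃ : ∀ t ∈ Set.Ioo (0:ℝ) 1, DifferentiableAt ℝ s₃ t)
    (hd₄ : ∀ t ∈ Set.Ioo (0:ℝ) 1, DifferentiableAt ℝ s₄ t)
    (hpar : ∀ t ∈ Set.Icc (0:ℝ) 1, γ (s₁ t) + γ (s₃ t) = γ (s₂ t) + γ (s₄ t))
    (hperp : ∀ t ∈ Set.Icc (0:ℝ) 1, inner ℝ (γ (s₂ t) - γ (s₁ t)) (γ (s₄ t) - γ (s₁ t)) = (0 : ℝ))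
    (hccw : ∀ t ∈ Set.Ioo (0:ℝ) 1, pdet (γ (s₂ t) - γ (s₁ t)) (γ (s₄ t) - γ (s₁ t)) > 0)
    (X Y : ℝ → ℝ)
    (hX : X = fun t => ‖γ (s₂ t) - γ (s₁ t)‖)
    (hY : Y = fun t => ‖γ (s₃ t) - γ (s₂ t)‖)
    (hint : IntervalIntegrable (fun t => Y t * deriv X t - X t * deriv Y t)
      MeasureTheory.volume 0 1)
    (h0₁₂ : s₁ 0 = s₂ 0) (h0₃₄ : s₃ 0 = s₄ 0)
    (h1₂₃ : s₂ 1 = s₃ 1) (h1₄₁ : s₄ 1 = s₁ 1 + 1) :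
    ∫ t in (0:ℝ)..1, (Y t * deriv X t - X t * deriv Y t)
      = ∫ s in (0:ℝ)..1, pdet (γ s) (deriv γ s) := by
  subst hX hY
  have hγd : Differentiable ℝ γ := hγ.differentiable one_ne_zero
  set φ : ℝ → ℝ := fun s => pdet (γ s) (deriv γ s)
  have hφ : Continuous φ := hγd.continuous.pdet (hγ.continuous_deriv le_rfl)
  have hγper : Function.Periodic γ 1 := hper
  have hφper : Function.Periodic φ 1 := fun s => by
    simp only [φ, hγper s, hγper.deriv s]
  set F : ℝ → ℝ := fun z => ∫ s in (0:ℝ)..z, φ s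
  have hF : ∀ z, HasDerivAt F (φ z) z := fun z => (hφ.integral_hasStrictDerivAt 0 z).hasDerivAt
  have hFc : Continuous F := continuous_iff_continuousAt.2 fun z => (hF z).continuousAt
  set G : ℝ → ℝ := fun τ => F (s₂ τ) - F (s₁ τ) + (F (s₄ τ) - F (s₃ τ))
  have hGc : ContinuousOn G (Icc 0 1) := by fun_prop
  have hF_period : F (s₁ 1 + 1) = F (s₁ 1) + ∫ s in (0:ℝ)..1, φ s := by
    simpa using hφper.intervalIntegral_add_eq_add 0 (s₁ 1) fun _ _ => hφ.intervalIntegrable _ _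
  rw [intervalIntegral.integral_eq_sub_of_hasDeriv_right_of_le zero_le_one hGc
    (fun t ht => (hasDerivAt_sweep hγd hF (hd₁ t ht) (hd₂ t ht) (hd₃ t ht) (hd₄ t ht)
      (eventually_of_mem (Ioo_mem_nhds ht.1 ht.2) fun τ hτ => hpar τ (Ioo_subset_Icc_self hτ))
      (hperp t (Ioo_subset_Icc_self ht)) (hccw t ht)).hasDerivWithinAt) hint]
  simp only [G, h0₁₂, h0₃₄, h1₂₃, h1₄₁, hF_period]
  ring
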